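/- Let v ∈ ℤ³ be primitive with ‖v‖² divisible by d² for a positive integer d. Then the subgroup M(v,d) = {a ∈ v^⊥ : d divides a × v} has index d in the lattice v^⊥ = {x ∈ ℤ³ : x · v = 0}. -/

import Mathlib

def dot3 (a b : Fin 3 → ℤ) : ℤ := a 0 * b 0 + a 1 * b 1 + a 2 * b 2

def cross3 (a b : Fin 3 → ℤ) : Fin 3 → ℤ :=
  ![a 1 * b 2 - a 2 * b 1, a 2 * b 0 - a 0 * b 2, a 0 * b 1 - a 1 * b 0]

lemma cross3_add_left (a b v : Fin 3 → ℤ) :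
    cross3 (a + b) v = cross3 a v + cross3 b v := by
  funext i; fin_cases i <;> simp [cross3] <;> ring

lemma cross3_zero_left (v : Fin 3 → ℤ) : cross3 0 v = 0 := by
  funext i; fin_cases i <;> simp [cross3]

lemma cross3_neg_left (a v : Fin 3 → ℤ) : cross3 (-a) v = -(cross3 a v) := by
  funext i; fin_cases i <;> simp [cross3] <;> ring

/-- The lattice `v^⊥` of integer vectors orthogonal to `v`. -/
def perpSub (v : Fin 3 → ℤ) : AddSubgroup (Fin 3 → ℤ) where
  carrier := {a | dot3 a v = 0}
  zero_mem' := by simp [dot3]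
  add_mem' := by
    intro a b ha hb
    simp only [Set.mem_setOf_eq, dot3, Pi.add_apply] at *
    linarith
  neg_mem' := by
    intro a ha
    simp only [Set.mem_setOf_eq, dot3, Pi.neg_apply] at *
    linarith

/-- The subgroup `M(v,d) = {a ∈ v^⊥ : d ∣ a × v}`. -/
def MSub (v : Fin 3 → ℤ) (d : ℤ) : AddSubgroup (Fin 3 → ℤ) where
  carrier := {a | dot3 a v = 0 ∧ ∀ i, d ∣ cross3 a v i}
  zero_mem' := ⟨by simp [dot3], by intro i; rw [cross3_zero_left]; simp⟩
  add_mem' := by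
    rintro a b ⟨ha, ha'⟩ ⟨hb, hb'⟩
    refine ⟨?_, ?_⟩
    · simp only [dot3, Pi.add_apply] at *; linarith
    · intro i; rw [cross3_add_left]; exact dvd_add (ha' i) (hb' i)
  neg_mem' := by
    rintro a ⟨ha, ha'⟩
    refine ⟨?_, ?_⟩
    · simp only [dot3, Pi.neg_apply] at *; linarith
    · intro i; rw [cross3_neg_left]; simpa using (ha' i).neg_right

/-- The subgroup `Γ(v,d) = {a : d ∣ a × v, d² ∣ (a × v) × v}`. -/
def GammaSub (v : Fin 3 → ℤ) (d : ℤ) : AddSubgroup (Fin 3 → ℤ) where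
  carrier := {a | (∀ i, d ∣ cross3 a v i) ∧ ∀ i, d^2 ∣ cross3 (cross3 a v) v i}
  zero_mem' := by
    constructor <;> intro i <;> rw [cross3_zero_left] <;> simp [cross3_zero_left]
  add_mem' := by
    rintro a b ⟨ha, ha'⟩ ⟨hb, hb'⟩
    refine ⟨fun i => ?_, fun i => ?_⟩
    · rw [cross3_add_left]; exact dvd_add (ha i) (hb i)
    · rw [cross3_add_left, cross3_add_left]; exact dvd_add (ha' i) (hb' i)
  neg_mem' := by
    rintro a ⟨ha, ha'⟩
    refine ⟨fun i => ?_, fun i => ?_⟩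
    · rw [cross3_neg_left]; simpa using (ha i).neg_right
    · rw [cross3_neg_left, cross3_neg_left]; simpa using (ha' i).neg_right

def Primitive (v : Fin 3 → ℤ) : Prop := Int.gcd (Int.gcd (v 0) (v 1)) (v 2) = 1

/-!
Pick `u` with `u ⬝ᵥ v = 1` (possible as `v` is primitive) and consider
`φ(a) = u ⬝ᵥ (a ⨯₃ v) mod d` on `v^⊥`. For `a ⊥ v` we have `(a ⨯₃ v) ⨯₃ v = -‖v‖² a`, so
`d ∣ (a ⨯₃ v) ⨯₃ v`, and the expansion `w = u ⨯₃ (w ⨯₃ v) + (w ⬝ᵥ u) v` shows that `d ∣ a ⨯₃ v`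
as soon as `d ∣ φ(a)`: thus `M(v,d) = ker φ`. Finally `φ(u ⨯₃ v) = 1 - ‖v‖² ‖u‖² ≡ 1`, so `φ` is
onto `ℤ/d`.
-/

open Matrix

section CommRing

variable {R : Type*} [CommRing R]

lemma cross_cross_self_of_dotProduct_eq_zero {a v : Fin 3 → R} (ha : a ⬝ᵥ v = 0) :
    a ⨯₃ v ⨯₃ v = -(v ⬝ᵥ v) • a := by
  rw [cross_cross_eq_smul_sub_smul, ha, zero_smul, zero_sub, neg_smul]

lemma eq_cross_cross_add_of_dotProduct_eq_one {u v : Fin 3 → R} (hu : u ⬝ᵥ v = 1)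
    (w : Fin 3 → R) : w = u ⨯₃ (w ⨯₃ v) + (w ⬝ᵥ u) • v := by
  rw [cross_cross_eq_smul_sub_smul', hu, one_smul, sub_add_cancel]

lemma dvd_dotProduct_of_forall_dvd {d : R} {w : Fin 3 → R} (hw : ∀ i, d ∣ w i)
    (u : Fin 3 → R) : d ∣ u ⬝ᵥ w :=
  Finset.dvd_sum fun i _ => (hw i).mul_left (u i)

lemma forall_dvd_cross_iff_dvd_dotProduct_cross {u v a : Fin 3 → R} {d : R}
    (hu : u ⬝ᵥ v = 1) (hd : d ∣ v ⬝ᵥ v) (ha : a ⬝ᵥ v = 0) :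
    (∀ i, d ∣ (a ⨯₃ v) i) ↔ d ∣ u ⬝ᵥ a ⨯₃ v := by
  refine ⟨fun h => dvd_dotProduct_of_forall_dvd h u, fun h i => ?_⟩
  rw [eq_cross_cross_add_of_dotProduct_eq_one hu (a ⨯₃ v),
    cross_cross_self_of_dotProduct_eq_zero ha, map_smul, dotProduct_comm (a ⨯₃ v) u]
  simp only [Pi.add_apply, Pi.smul_apply, smul_eq_mul]
  exact dvd_add ((dvd_neg.mpr hd).mul_right _) (h.mul_right _)

lemma dotProduct_cross_cross_self_of_dotProduct_eq_one {u v : Fin 3 → R} (hu : u ⬝ᵥ v = 1) :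
    u ⬝ᵥ u ⨯₃ v ⨯₃ v = 1 - (v ⬝ᵥ v) * (u ⬝ᵥ u) := by
  rw [cross_cross_eq_smul_sub_smul, dotProduct_sub, dotProduct_smul, dotProduct_smul, hu,
    smul_eq_mul, smul_eq_mul, mul_one]

end CommRing

lemma dot3_eq_dotProduct (a b : Fin 3 → ℤ) : dot3 a b = a ⬝ᵥ b :=
  (vec3_dotProduct a b).symm

lemma mem_perpSub {v a : Fin 3 → ℤ} : a ∈ perpSub v ↔ a ⬝ᵥ v = 0 := by
  rw [← dot3_eq_dotProduct]; rfl

lemma mem_MSub {v a : Fin 3 → ℤ} {d : ℤ} :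
    a ∈ MSub v d ↔ a ⬝ᵥ v = 0 ∧ ∀ i, d ∣ (a ⨯₃ v) i := by
  rw [← dot3_eq_dotProduct]; rfl

lemma Primitive.exists_dotProduct_eq_one {v : Fin 3 → ℤ} (hv : Primitive v) :
    ∃ u : Fin 3 → ℤ, u ⬝ᵥ v = 1 := by
  obtain ⟨x, y, hxy⟩ := Int.isCoprime_iff_gcd_eq_one.mpr hv
  refine ⟨![x * Int.gcdA (v 0) (v 1), x * Int.gcdB (v 0) (v 1), y], ?_⟩
  rw [vec3_dotProduct, ← hxy, Int.gcd_eq_gcd_ab (v 0) (v 1)]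
  simp only [cons_val_zero, cons_val_one, cons_val_two, Nat.succ_eq_add_one, Nat.reduceAdd,
    head_cons, tail_cons]
  ring

def crossDotHom (u v : Fin 3 → ℤ) (d : ℕ) : (Fin 3 → ℤ) →+ ZMod d :=
  (Int.castAddHom (ZMod d)).comp
    ((dotProductBilin ℤ ℤ u).comp (crossProduct.flip v)).toAddMonoidHom

lemma crossDotHom_apply (u v : Fin 3 → ℤ) (d : ℕ) (a : Fin 3 → ℤ) :
    crossDotHom u v d a = ((u ⬝ᵥ a ⨯₃ v : ℤ) : ZMod d) :=
  rfl

lemma MSub_eq_ker_crossDotHom_inf_perpSub {u v : Fin 3 → ℤ} {d : ℕ} (hu : u ⬝ᵥ v = 1)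
    (hd : (d : ℤ) ∣ v ⬝ᵥ v) : MSub v d = (crossDotHom u v d).ker ⊓ perpSub v := by
  ext a
  rw [mem_MSub, AddSubgroup.mem_inf, AddMonoidHom.mem_ker, mem_perpSub, crossDotHom_apply,
    ZMod.intCast_zmod_eq_zero_iff_dvd]
  constructor
  · rintro ⟨ha, hdiv⟩
    exact ⟨(forall_dvd_cross_iff_dvd_dotProduct_cross hu hd ha).mp hdiv, ha⟩
  · rintro ⟨hdiv, ha⟩
    exact ⟨ha, (forall_dvd_cross_iff_dvd_dotProduct_cross hu hd ha).mpr hdiv⟩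

lemma map_perpSub_crossDotHom_eq_top {u v : Fin 3 → ℤ} {d : ℕ} (hu : u ⬝ᵥ v = 1)
    (hd : (d : ℤ) ∣ v ⬝ᵥ v) : (perpSub v).map (crossDotHom u v d) = ⊤ := by
  have hone : crossDotHom u v d (u ⨯₃ v) = 1 := by
    rw [crossDotHom_apply, dotProduct_cross_cross_self_of_dotProduct_eq_one hu, Int.cast_sub,
      Int.cast_mul, (ZMod.intCast_zmod_eq_zero_iff_dvd _ _).mpr hd, zero_mul, Int.cast_one,
      sub_zero]
  have huv : u ⨯₃ v ∈ perpSub v :=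
    mem_perpSub.mpr ((dotProduct_comm _ _).trans (dot_cross_self u v))
  refine eq_top_iff.mpr fun y _ => ?_
  obtain ⟨k, rfl⟩ := ZMod.intCast_surjective y
  exact ⟨k • (u ⨯₃ v), zsmul_mem huv k, by rw [map_zsmul, hone, zsmul_one]⟩

theorem M_relindex_perp_general (v : Fin 3 → ℤ) (hv : Primitive v) (d : ℕ)
    (hdvd : (d : ℤ)^2 ∣ dot3 v v) :
    (MSub v (d : ℤ)).relIndex (perpSub v) = d := by
  obtain ⟨u, hu⟩ := hv.exists_dotProduct_eq_one
  have hd : (d : ℤ) ∣ v ⬝ᵥ v :=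
    (dvd_pow_self _ two_ne_zero).trans (dot3_eq_dotProduct v v ▸ hdvd)
  rw [MSub_eq_ker_crossDotHom_inf_perpSub hu hd, AddSubgroup.inf_relIndex_right,
    AddSubgroup.relIndex_ker, map_perpSub_crossDotHom_eq_top hu hd, AddSubgroup.card_top,
    Nat.card_zmod]

/-- For primitive `v` with `d² ∣ ‖v‖²`, the subgroup `M(v,d)` has index `d` in `v^⊥`. -/
theorem M_relindex_perp (v : Fin 3 → ℤ) (hv : Primitive v) (d : ℕ) (hd : 0 < d)
    (hdvd : (d : ℤ)^2 ∣ dot3 v v) :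
    (MSub v (d : ℤ)).relIndex (perpSub v) = d :=
  M_relindex_perp_general v hv d hdvd
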